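/- For the state ρ = (1/4)(𝟙⊗𝟙 + 0.4 σ₁⊗𝟙 + 0.4(𝟙⊗σ₁ − 𝟙⊗σ₃) + 0.2 σ₃⊗σ₃) and the POVMs M^A_{0|0} = M^B_{0|0} = |0⟩⟨0|, M^A_{0|1} = M^B_{0|1} = |+⟩⟨+| (with complements for outcome 1), the determinant witness Q = det [ [p(0|0;0,0)−p(0|1;0,0), p(0|0;1,0)−p(0|1;1,0)], [p(0|0;0,1)−p(0|1;0,1), p(0|0;1,1)−p(0|1;1,1)] ] is nonzero, where p(b|a;x,y) = p(a,b|x,y)/p(a|x) are Bob's conditional probabilities. -/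

import Mathlib

/-!
The state is a real combination of Kronecker products of Pauli matrices, so
`tr((A ⊗ B) ρ)` splits into products of single-qubit traces `tr(A σ)` and `tr(B σ)`.
Each measurement operator has trace one and is then determined by its Bloch
components `tr(M σX)`, `tr(M σZ)`, which turns every probability into an explicit
rational number; the witness evaluates to `Q = -4/105`.
-/

open Matrix Kronecker
open scoped BigOperators

/-- The state ρ = (1/4)(𝟙⊗𝟙 + 0.4 σ₁⊗𝟙 + 0.4(𝟙⊗σ₁ − 𝟙⊗σ₃) + 0.2 σ₃⊗σ₃),
written out explicitly in the computational basis. -/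
noncomputable def giorgiState : Matrix (Fin 2 × Fin 2) (Fin 2 × Fin 2) ℂ :=
  ((1 : ℂ) / 4) • ((1 : Matrix (Fin 2 × Fin 2) (Fin 2 × Fin 2) ℂ)
    + ((2 : ℂ) / 5) • ((!![0, 1; 1, 0] : Matrix (Fin 2) (Fin 2) ℂ) ⊗ₖ (1 : Matrix (Fin 2) (Fin 2) ℂ))
    + ((2 : ℂ) / 5) • (((1 : Matrix (Fin 2) (Fin 2) ℂ) ⊗ₖ (!![0, 1; 1, 0] : Matrix (Fin 2) (Fin 2) ℂ))
        - ((1 : Matrix (Fin 2) (Fin 2) ℂ) ⊗ₖ (!![1, 0; 0, -1] : Matrix (Fin 2) (Fin 2) ℂ)))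
    + ((1 : ℂ) / 5) • ((!![1, 0; 0, -1] : Matrix (Fin 2) (Fin 2) ℂ) ⊗ₖ (!![1, 0; 0, -1] : Matrix (Fin 2) (Fin 2) ℂ)))

/-- The POVM with elements |0⟩⟨0|, |1⟩⟨1| (setting 0) and |+⟩⟨+|, |−⟩⟨−| (setting 1),
indexed as M x a for setting x and outcome a. -/
noncomputable def povmZX : Fin 2 → Fin 2 → Matrix (Fin 2) (Fin 2) ℂ :=
  ![![!![1, 0; 0, 0], !![0, 0; 0, 1]],
    ![!![1/2, 1/2; 1/2, 1/2], !![1/2, -(1/2); -(1/2), 1/2]]]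

/-- Joint probabilities p(a,b|x,y) for Alice and Bob measuring povmZX on giorgiState. -/
noncomputable def jointP (a b x y : Fin 2) : ℝ :=
  (((povmZX x a ⊗ₖ povmZX y b) * giorgiState).trace).re

/-- Alice's marginal p(a|x). -/
noncomputable def margA (a x : Fin 2) : ℝ :=
  (((povmZX x a ⊗ₖ (1 : Matrix (Fin 2) (Fin 2) ℂ)) * giorgiState).trace).re

/-- Bob's conditional probability p(b|a;x,y) = p(a,b|x,y)/p(a|x). -/
noncomputable def condB (b a x y : Fin 2) : ℝ := jointP a b x y / margA a x

local notation "σX" => (!![0, 1; 1, 0] : Matrix (Fin 2) (Fin 2) ℂ)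
local notation "σZ" => (!![1, 0; 0, -1] : Matrix (Fin 2) (Fin 2) ℂ)

theorem Matrix.trace_kronecker_mul_kronecker {R m n : Type*} [CommSemiring R] [Fintype m]
    [Fintype n] (A C : Matrix m m R) (B D : Matrix n n R) :
    ((A ⊗ₖ B) * (C ⊗ₖ D)).trace = (A * C).trace * (B * D).trace := by
  rw [← mul_kronecker_mul, trace_kronecker]

theorem trace_kronecker_mul_giorgiState (A B : Matrix (Fin 2) (Fin 2) ℂ) :
    ((A ⊗ₖ B) * giorgiState).trace =
      (A.trace * B.trace + 2 / 5 * (A * σX).trace * B.trace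
        + 2 / 5 * A.trace * ((B * σX).trace - (B * σZ).trace)
        + 1 / 5 * (A * σZ).trace * (B * σZ).trace) / 4 := by
  simp only [giorgiState, mul_smul_comm, Matrix.mul_add, Matrix.mul_sub, trace_smul, trace_add,
    trace_sub, trace_kronecker_mul_kronecker, Matrix.mul_one, trace_kronecker, smul_eq_mul]
  ring

def blochX : Fin 2 → Fin 2 → ℝ := ![![0, 0], ![1, -1]]

def blochZ : Fin 2 → Fin 2 → ℝ := ![![1, -1], ![0, 0]]

theorem trace_povmZX (x a : Fin 2) : (povmZX x a).trace = 1 := by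
  fin_cases x <;> fin_cases a <;> simp [povmZX, trace, Fin.sum_univ_two] <;> norm_num

theorem trace_povmZX_mul_σX (x a : Fin 2) : (povmZX x a * σX).trace = blochX x a := by
  fin_cases x <;> fin_cases a <;> simp [povmZX, blochX, trace, Fin.sum_univ_two] <;>
    norm_num

theorem trace_povmZX_mul_σZ (x a : Fin 2) : (povmZX x a * σZ).trace = blochZ x a := by
  fin_cases x <;> fin_cases a <;> simp [povmZX, blochZ, trace, Fin.sum_univ_two]

theorem jointP_eq (a b x y : Fin 2) :
    jointP a b x y = (1 + 2 / 5 * blochX x a + 2 / 5 * (blochX y b - blochZ y b)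
      + 1 / 5 * blochZ x a * blochZ y b) / 4 := by
  rw [jointP, trace_kronecker_mul_giorgiState, trace_povmZX, trace_povmZX, trace_povmZX_mul_σX,
    trace_povmZX_mul_σX, trace_povmZX_mul_σZ, trace_povmZX_mul_σZ]
  simp

theorem margA_eq (a x : Fin 2) : margA a x = (1 + 2 / 5 * blochX x a) / 2 := by
  rw [margA, trace_kronecker_mul_giorgiState, Matrix.one_mul, Matrix.one_mul, trace_povmZX,
    trace_povmZX_mul_σX, trace_povmZX_mul_σZ]
  simp [trace, Fin.sum_univ_two]
  ring

theorem giorgiState_Q_eq :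
    (condB 0 0 0 0 - condB 0 1 0 0) * (condB 0 0 1 1 - condB 0 1 1 1)
      - (condB 0 0 1 0 - condB 0 1 1 0) * (condB 0 0 0 1 - condB 0 1 0 1) = -4 / 105 := by
  simp only [condB, jointP_eq, margA_eq, blochX, blochZ]
  norm_num

/-- the determinant witness Q built from Bob's conditional probabilities
is nonzero for giorgiState with these measurements. -/
theorem giorgiState_Q_ne_zero :
    (condB 0 0 0 0 - condB 0 1 0 0) * (condB 0 0 1 1 - condB 0 1 1 1)
      - (condB 0 0 1 0 - condB 0 1 1 0) * (condB 0 0 0 1 - condB 0 1 0 1) ≠ 0 := by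
  rw [giorgiState_Q_eq]
  norm_num
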